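/- Let Π = {t_0 < t_1 < ... < t_{2^m}} and Π' = {s_0 < ... < s_{2^{m'}}} be partitions of [a,b] and [c,d] respectively, and let F : [a,b] × [c,d] → ℝ have finite (p,q)-bivariation for p, q ≥ 1. Let ρ, σ : [0,∞) → [0,∞) be non-decreasing with ρ(u)σ(u) = u. Then Σ_{i=1}^{2^m} Σ_{j=1}^{2^{m'}} |Δ_iΔ_j F(t_i, s_j)| ≤ 4 · 2^{m+m'} ρ(‖F‖_{1;p} / 2^{m/p}) σ(‖F‖_{2;q} / 2^{m'/q}). -/

import Mathlib

open Set

noncomputable section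

/-- Rectangular increment of a two-variable function. -/
def rect (H : ℝ → ℝ → ℝ) (x x' y y' : ℝ) : ℝ :=
  H x' y' - H x y' - H x' y + H x y

/-- `t` is a (monotone) partition of `[a,b]`. -/
def IsPartition {n : ℕ} (a b : ℝ) (t : Fin (n + 1) → ℝ) : Prop :=
  Monotone t ∧ t 0 = a ∧ t (Fin.last n) = b

/-- The set of `p`-variation sums of `f` over partitions of `[a,b]`. -/
def pVarSet (p a b : ℝ) (f : ℝ → ℝ) : Set ℝ :=
  {v | ∃ (n : ℕ) (t : Fin (n + 1) → ℝ), IsPartition a b t ∧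
        v = ∑ i : Fin n, |f (t i.succ) - f (t i.castSucc)| ^ p}

/-- The `p`-variation seminorm `‖f‖_{[a,b],p}`. -/
def pVarNorm (p a b : ℝ) (f : ℝ → ℝ) : ℝ :=
  sSup (pVarSet p a b f) ^ (1 / p)

def biVar1Set (p a b c d : ℝ) (F : ℝ → ℝ → ℝ) : Set ℝ :=
  {v | ∃ y₁ ∈ Icc c d, ∃ y₂ ∈ Icc c d, v = pVarNorm p a b (fun x => F x y₁ - F x y₂)}

/-- The first bivariation seminorm `‖F‖_{1;p}`. -/
def biVar1 (p a b c d : ℝ) (F : ℝ → ℝ → ℝ) : ℝ := sSup (biVar1Set p a b c d F)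

def biVar2Set (q a b c d : ℝ) (F : ℝ → ℝ → ℝ) : Set ℝ :=
  {v | ∃ x₁ ∈ Icc a b, ∃ x₂ ∈ Icc a b, v = pVarNorm q c d (fun y => F x₁ y - F x₂ y)}

/-- The second bivariation seminorm `‖F‖_{2;q}`. -/
def biVar2 (q a b c d : ℝ) (F : ℝ → ℝ → ℝ) : ℝ := sSup (biVar2Set q a b c d F)

/-- `‖F‖_{1;p} < ∞`: all the suprema involved are finite. -/
def FiniteBiVar1 (p a b c d : ℝ) (F : ℝ → ℝ → ℝ) : Prop :=
  (∀ y₁ ∈ Icc c d, ∀ y₂ ∈ Icc c d,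
      BddAbove (pVarSet p a b (fun x => F x y₁ - F x y₂))) ∧
  BddAbove (biVar1Set p a b c d F)

/-- `‖F‖_{2;q} < ∞`: all the suprema involved are finite. -/
def FiniteBiVar2 (q a b c d : ℝ) (F : ℝ → ℝ → ℝ) : Prop :=
  (∀ x₁ ∈ Icc a b, ∀ x₂ ∈ Icc a b,
      BddAbove (pVarSet q c d (fun y => F x₁ y - F x₂ y))) ∧
  BddAbove (biVar2Set q a b c d F)

/-!
Fix two consecutive points `s_{j-1}, s_j`. The `j`-th column of the grid consists of the increments
of `x ↦ F x s_j - F x s_{j-1}` along `t`, whose `p`-th powers sum to at most `‖F‖_{1;p} ^ p`; by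
the power-mean inequality the column sum is at most `2^m · α` with `α = ‖F‖_{1;p} / 2^{m/p}`.
Summing the columns bounds the whole sum by `2^{m+m'} α`, and the same argument on rows by
`2^{m+m'} β`. Finally `min α β = ρ (min α β) σ (min α β) ≤ ρ α σ β` by monotonicity.
-/

open Finset in
lemma sum_abs_le_card_mul_div_rpow {ι : Type*} (s : Finset ι) (g : ι → ℝ) {p V : ℝ}
    (hp : 1 ≤ p) (hV : 0 ≤ V) (h : ∑ i ∈ s, |g i| ^ p ≤ V ^ p) :
    ∑ i ∈ s, |g i| ≤ #s * (V / (#s : ℝ) ^ (1 / p)) := by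
  rcases s.eq_empty_or_nonempty with rfl | hs
  · simp
  have hp0 : 0 < p := by linarith
  have hn : (0 : ℝ) < #s := by exact_mod_cast hs.card_pos
  have hpow : (∑ i ∈ s, |g i|) ^ p ≤ ((#s : ℝ) ^ (1 - 1 / p) * V) ^ p :=
    calc (∑ i ∈ s, |g i|) ^ p ≤ (#s : ℝ) ^ (p - 1) * ∑ i ∈ s, |g i| ^ p :=
          Real.rpow_sum_le_const_mul_sum_rpow s g hp
      _ ≤ (#s : ℝ) ^ (p - 1) * V ^ p := by gcongr
      _ = ((#s : ℝ) ^ (1 - 1 / p) * V) ^ p := by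
          rw [Real.mul_rpow (by positivity) hV, ← Real.rpow_mul hn.le]
          congr 2
          field_simp
  calc ∑ i ∈ s, |g i| ≤ (#s : ℝ) ^ (1 - 1 / p) * V :=
        (Real.rpow_le_rpow_iff (by positivity) (by positivity) hp0).1 hpow
    _ = #s * (V / (#s : ℝ) ^ (1 / p)) := by
        rw [Real.rpow_sub hn, Real.rpow_one]
        ring

lemma IsPartition.mem_Icc {n : ℕ} {a b : ℝ} {t : Fin (n + 1) → ℝ} (ht : IsPartition a b t)
    (k : Fin (n + 1)) : t k ∈ Icc a b :=
  ⟨ht.2.1 ▸ ht.1 (Fin.zero_le k), ht.2.2 ▸ ht.1 (Fin.le_last k)⟩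

lemma nonneg_of_mem_pVarSet {p a b v : ℝ} {f : ℝ → ℝ} (hv : v ∈ pVarSet p a b f) : 0 ≤ v := by
  obtain ⟨_, _, _, rfl⟩ := hv
  exact Finset.sum_nonneg fun _ _ => Real.rpow_nonneg (abs_nonneg _) _

lemma pVarNorm_nonneg (p a b : ℝ) (f : ℝ → ℝ) : 0 ≤ pVarNorm p a b f :=
  Real.rpow_nonneg (Real.sSup_nonneg fun _ => nonneg_of_mem_pVarSet) _

lemma sum_rpow_le_pVarNorm_rpow {p a b : ℝ} (hp : p ≠ 0) {f : ℝ → ℝ}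
    (hf : BddAbove (pVarSet p a b f)) {n : ℕ} {t : Fin (n + 1) → ℝ} (ht : IsPartition a b t) :
    ∑ i : Fin n, |f (t i.succ) - f (t i.castSucc)| ^ p ≤ pVarNorm p a b f ^ p := by
  rw [pVarNorm, one_div, Real.rpow_inv_rpow (Real.sSup_nonneg fun _ => nonneg_of_mem_pVarSet) hp]
  exact le_csSup hf ⟨n, t, ht, rfl⟩

lemma biVar1_nonneg (p a b c d : ℝ) (F : ℝ → ℝ → ℝ) : 0 ≤ biVar1 p a b c d F :=
  Real.sSup_nonneg fun _ ⟨_, _, _, _, hv⟩ => hv ▸ pVarNorm_nonneg _ _ _ _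

lemma pVarNorm_le_biVar1 {p a b c d y₁ y₂ : ℝ} {F : ℝ → ℝ → ℝ}
    (hF : BddAbove (biVar1Set p a b c d F)) (hy₁ : y₁ ∈ Icc c d) (hy₂ : y₂ ∈ Icc c d) :
    pVarNorm p a b (fun x => F x y₁ - F x y₂) ≤ biVar1 p a b c d F :=
  le_csSup hF ⟨y₁, hy₁, y₂, hy₂, rfl⟩

lemma sum_abs_rect_le_of_finiteBiVar1 {p a b c d y y' : ℝ} (hp : 1 ≤ p) {F : ℝ → ℝ → ℝ}
    (hF : FiniteBiVar1 p a b c d F) {n : ℕ} {t : Fin (n + 1) → ℝ} (ht : IsPartition a b t)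
    (hy : y ∈ Icc c d) (hy' : y' ∈ Icc c d) :
    ∑ i : Fin n, |rect F (t i.castSucc) (t i.succ) y y'|
      ≤ n * (biVar1 p a b c d F / (n : ℝ) ^ (1 / p)) := by
  set f : ℝ → ℝ := fun x => F x y' - F x y
  have hrect (i : Fin n) :
      rect F (t i.castSucc) (t i.succ) y y' = f (t i.succ) - f (t i.castSucc) := by
    simp only [rect, f]
    ring
  have hsum : ∑ i : Fin n, |f (t i.succ) - f (t i.castSucc)| ^ p ≤ biVar1 p a b c d F ^ p :=
    (sum_rpow_le_pVarNorm_rpow (by positivity) (hF.1 y' hy' y hy) ht).trans <|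
      Real.rpow_le_rpow (pVarNorm_nonneg _ _ _ _) (pVarNorm_le_biVar1 hF.2 hy' hy) (by positivity)
  simpa only [hrect, Finset.card_univ, Fintype.card_fin] using
    sum_abs_le_card_mul_div_rpow Finset.univ _ hp (biVar1_nonneg _ _ _ _ _ _) hsum

lemma rect_flip (F : ℝ → ℝ → ℝ) (x x' y y' : ℝ) : rect (flip F) y y' x x' = rect F x x' y y' := by
  simp only [rect, flip]
  ring

lemma biVar2_eq_biVar1_flip (q a b c d : ℝ) (F : ℝ → ℝ → ℝ) :
    biVar2 q a b c d F = biVar1 q c d a b (flip F) :=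
  rfl

lemma finiteBiVar2_iff_finiteBiVar1_flip {q a b c d : ℝ} {F : ℝ → ℝ → ℝ} :
    FiniteBiVar2 q a b c d F ↔ FiniteBiVar1 q c d a b (flip F) :=
  Iff.rfl

lemma biVar2_nonneg (q a b c d : ℝ) (F : ℝ → ℝ → ℝ) : 0 ≤ biVar2 q a b c d F :=
  biVar1_nonneg q c d a b (flip F)

lemma sum_abs_rect_le_of_finiteBiVar2 {q a b c d x x' : ℝ} (hq : 1 ≤ q) {F : ℝ → ℝ → ℝ}
    (hF : FiniteBiVar2 q a b c d F) {n : ℕ} {s : Fin (n + 1) → ℝ} (hs : IsPartition c d s)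
    (hx : x ∈ Icc a b) (hx' : x' ∈ Icc a b) :
    ∑ j : Fin n, |rect F x x' (s j.castSucc) (s j.succ)|
      ≤ n * (biVar2 q a b c d F / (n : ℝ) ^ (1 / q)) := by
  simpa only [rect_flip, biVar2_eq_biVar1_flip] using
    sum_abs_rect_le_of_finiteBiVar1 hq (finiteBiVar2_iff_finiteBiVar1_flip.1 hF) hs hx hx'

lemma min_le_mul_of_monotoneOn_of_mul_eq_self {ρ σ : ℝ → ℝ}
    (hρ : MonotoneOn ρ (Ici 0)) (hσ : MonotoneOn σ (Ici 0))
    (hρ0 : ∀ u ≥ (0 : ℝ), 0 ≤ ρ u) (hσ0 : ∀ u ≥ (0 : ℝ), 0 ≤ σ u)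
    (hρσ : ∀ u ≥ (0 : ℝ), ρ u * σ u = u) {α β : ℝ} (hα : 0 ≤ α) (hβ : 0 ≤ β) :
    min α β ≤ ρ α * σ β := by
  have hmin : 0 ≤ min α β := le_min hα hβ
  calc min α β = ρ (min α β) * σ (min α β) := (hρσ _ hmin).symm
    _ ≤ ρ α * σ β :=
        mul_le_mul (hρ hmin hα (min_le_left _ _)) (hσ hmin hβ (min_le_right _ _))
          (hσ0 _ hmin) (hρ0 _ hα)

lemma natCast_two_pow_rpow_one_div (k : ℕ) (r : ℝ) :
    ((2 ^ k : ℕ) : ℝ) ^ (1 / r) = (2 : ℝ) ^ ((k : ℝ) / r) := by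
  rw [Nat.cast_pow, Nat.cast_ofNat, ← Real.rpow_natCast, ← Real.rpow_mul (by norm_num), mul_one_div]

/-- bound for the sum of absolute rectangular increments of `F`
over a `2^m × 2^{m'}` grid in terms of the `(p,q)`-bivariation seminorms. -/
theorem sum_abs_rect_le_rho_sigma
    (a b c d p q : ℝ) (hp : 1 ≤ p) (hq : 1 ≤ q)
    (F : ℝ → ℝ → ℝ) (hF1 : FiniteBiVar1 p a b c d F) (hF2 : FiniteBiVar2 q a b c d F)
    (ρ σ : ℝ → ℝ)
    (hρ : MonotoneOn ρ (Set.Ici 0)) (hσ : MonotoneOn σ (Set.Ici 0))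
    (hρ0 : ∀ u ≥ (0 : ℝ), 0 ≤ ρ u) (hσ0 : ∀ u ≥ (0 : ℝ), 0 ≤ σ u)
    (hρσ : ∀ u ≥ (0 : ℝ), ρ u * σ u = u)
    (m m' : ℕ) (t : Fin (2 ^ m + 1) → ℝ) (s : Fin (2 ^ m' + 1) → ℝ)
    (ht : IsPartition a b t) (hs : IsPartition c d s) :
    ∑ i : Fin (2 ^ m), ∑ j : Fin (2 ^ m'),
        |rect F (t i.castSucc) (t i.succ) (s j.castSucc) (s j.succ)|
      ≤ 4 * 2 ^ (m + m') *
          ρ (biVar1 p a b c d F / (2 : ℝ) ^ ((m : ℝ) / p)) *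
          σ (biVar2 q a b c d F / (2 : ℝ) ^ ((m' : ℝ) / q)) := by
  set α := biVar1 p a b c d F / (2 : ℝ) ^ ((m : ℝ) / p)
  set β := biVar2 q a b c d F / (2 : ℝ) ^ ((m' : ℝ) / q)
  have hα : 0 ≤ α := div_nonneg (biVar1_nonneg _ _ _ _ _ _) (by positivity)
  have hβ : 0 ≤ β := div_nonneg (biVar2_nonneg _ _ _ _ _ _) (by positivity)
  have hcols : ∑ i : Fin (2 ^ m), ∑ j : Fin (2 ^ m'),
      |rect F (t i.castSucc) (t i.succ) (s j.castSucc) (s j.succ)| ≤ 2 ^ (m + m') * α := by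
    rw [Finset.sum_comm]
    refine (Finset.sum_le_sum fun j _ =>
      sum_abs_rect_le_of_finiteBiVar1 hp hF1 ht (hs.mem_Icc _) (hs.mem_Icc _)).trans_eq ?_
    simp only [natCast_two_pow_rpow_one_div, Finset.sum_const, Finset.card_univ, Fintype.card_fin]
    push_cast
    ring
  have hrows : ∑ i : Fin (2 ^ m), ∑ j : Fin (2 ^ m'),
      |rect F (t i.castSucc) (t i.succ) (s j.castSucc) (s j.succ)| ≤ 2 ^ (m + m') * β := by
    refine (Finset.sum_le_sum fun i _ =>
      sum_abs_rect_le_of_finiteBiVar2 hq hF2 hs (ht.mem_Icc _) (ht.mem_Icc _)).trans_eq ?_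
    simp only [natCast_two_pow_rpow_one_div, Finset.sum_const, Finset.card_univ, Fintype.card_fin]
    push_cast
    ring
  have hρσ_le := min_le_mul_of_monotoneOn_of_mul_eq_self hρ hσ hρ0 hσ0 hρσ hα hβ
  calc _ ≤ 2 ^ (m + m') * min α β := by
        rw [mul_min_of_nonneg _ _ (by positivity)]
        exact le_min hcols hrows
    _ ≤ 2 ^ (m + m') * (ρ α * σ β) := by gcongr
    _ ≤ 4 * 2 ^ (m + m') * ρ α * σ β := by
        rw [mul_assoc _ (ρ α), mul_assoc 4]
        exact le_mul_of_one_le_left (mul_nonneg (by positivity) ((le_min hα hβ).trans hρσ_le))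
          (by norm_num)
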